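/- arXiv:2310.18036 — 2 statements merged into one kernel-verified Lean document; each statement's English description precedes it below -/
import Mathlib

section
/- Let T be a 2-cut search tree on a tree G, let v be a node with parent p, and let a ∈ ∂(T_p). Then the three vertices v, p, a lie on a common path in G (in some order). -/
open SimpleGraph

variable {V : Type*}

/-- Reachability within a vertex set `S`. -/
def reachIn (G : SimpleGraph V) (S : Set V) : V → V → Prop :=
  Relation.ReflTransGen (fun x y => x ∈ S ∧ y ∈ S ∧ G.Adj x y)

/-- The connected component of `v` inside the vertex set `S`. -/
def compIn (G : SimpleGraph V) (S : Set V) (v : V) : Set V :=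
  {u | reachIn G S v u}

/-- `IsSearchTree G par S r`: the parent map `par` describes a search tree with root `r`
on the part of `G` induced by `S`, built recursively: the root `r` is chosen, and each
connected component of `S \ {r}` carries a search tree whose root is a child of `r`. -/
inductive IsSearchTree (G : SimpleGraph V) (par : V → Option V) : Set V → V → Prop where
  | node (S : Set V) (r : V) (ρ : V → V) (hr : r ∈ S)
      (hρ : ∀ v ∈ S, v ≠ r → par (ρ v) = some r)
      (h : ∀ v ∈ S, v ≠ r → IsSearchTree G par (compIn G (S \ {r}) v) (ρ v)) :
      IsSearchTree G par S r

/-- `isAnc par a v`: `a` is an ancestor of `v` (reflexively). -/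
def isAnc (par : V → Option V) (a v : V) : Prop :=
  Relation.ReflTransGen (fun x y => par x = some y) v a

/-- The subtree rooted at `v`: all descendants of `v` (including `v`). -/
def subtree (par : V → Option V) (v : V) : Set V := {u | isAnc par v u}

/-- The outer boundary `∂(T_v)` of the subtree rooted at `v`. -/
def bdry (G : SimpleGraph V) (par : V → Option V) (v : V) : Set V :=
  {x | x ∉ subtree par v ∧ ∃ u ∈ subtree par v, G.Adj x u}

/-- A search tree is 2-cut if every subtree boundary has size at most 2. -/
def TwoCut (G : SimpleGraph V) (par : V → Option V) : Prop :=
  ∀ v, (bdry G par v).ncard ≤ 2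

open Classical in
/-- The STT rotation of `v` with its parent `p`: `p` becomes a child of `v`, `v` takes the
former parent of `p`, and any child `c` of `v` with `p ∈ ∂(T_c)` is reattached to `p`. -/
noncomputable def rotate (G : SimpleGraph V) (par : V → Option V) (v p : V) :
    V → Option V := fun x =>
  if x = v then par p
  else if x = p then some v
  else if par x = some v ∧ p ∈ bdry G par x then some p
  else par x

/-- A splay step at `x`: a single rotation if `x` has no grandparent; a ZIG-ZAG
(two rotations at `x`) if `x` is a separator; a ZIG-ZIG (rotation at the parent,
then at `x`) otherwise. -/
noncomputable def splayStep (G : SimpleGraph V) (par : V → Option V) (x : V) :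
    V → Option V :=
  match par x with
  | none => par
  | some p =>
    match par p with
    | none => rotate G par x p
    | some g =>
      if (bdry G par x).ncard = 2 then
        rotate G (rotate G par x p) x g
      else
        rotate G (rotate G par p g) x p

/-!
Let `P` be the path from `v` to `a` in `G`; if it passes through `p` we are done. Otherwise let
`Q` be the path from `v` to `p`; it stays in `T_v` until its last step, because `T_v ∪ {p}` is
connected. If `Q` met `P` at some `m ≠ v`, then `m` would lie in the subtree `T_c` of a child `c`
of `v`, and `∂(T_c)` would contain three vertices: `v` (as `T_v` is connected), `p` (where `Q`
leaves `T_c` after `m`) and the vertex where `P` leaves `T_c` after `m`. This contradicts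
2-cut, so `Q` and `P` meet only at `v` and `Q⁻¹ P` is a path through `p`, `v` and `a`.
-/

section ReachIn

variable {G : SimpleGraph V} {A : Set V} {x y z : V}

lemma reachIn.symm (h : reachIn G A x y) : reachIn G A y x := by
  induction h with
  | refl => exact .refl
  | tail _ hyz ih => exact .head ⟨hyz.2.1, hyz.1, hyz.2.2.symm⟩ ih

lemma mem_compIn_self : x ∈ compIn G A x := .refl

lemma compIn_subset (hx : x ∈ A) : compIn G A x ⊆ A := by
  intro y hy
  rcases Relation.ReflTransGen.cases_tail hy with rfl | ⟨_, _, hstep⟩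
  · exact hx
  · exact hstep.2.1

lemma mem_compIn_of_reachIn (hy : y ∈ compIn G A x) (h : reachIn G A y z) :
    z ∈ compIn G A x :=
  Relation.ReflTransGen.trans hy h

lemma reachIn_compIn (h : reachIn G A x y) : reachIn G (compIn G A x) x y := by
  induction h with
  | refl => exact .refl
  | @tail b c hb hbc ih =>
    exact .tail ih ⟨hb, mem_compIn_of_reachIn hb (.single hbc), hbc.2.2⟩

lemma exists_walk_of_reachIn (h : reachIn G A x y) (hx : x ∈ A) :
    ∃ w : G.Walk x y, ∀ z ∈ w.support, z ∈ A := by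
  induction h with
  | refl => exact ⟨.nil, by simpa using hx⟩
  | @tail b c _ hbc ih =>
    obtain ⟨w, hw⟩ := ih
    refine ⟨w.concat hbc.2.2, fun z hz => ?_⟩
    rw [Walk.support_concat, List.mem_append, List.mem_singleton] at hz
    rcases hz with hz | rfl
    · exact hw z hz
    · exact hbc.2.1

end ReachIn

section Paths

variable {G : SimpleGraph V} {A : Set V} {x y u : V}

lemma SimpleGraph.IsAcyclic.support_subset_of_walk (hG : G.IsAcyclic) {w : G.Walk x y}
    (hw : w.IsPath) (W : G.Walk x y) (hW : ∀ z ∈ W.support, z ∈ A) :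
    ∀ z ∈ w.support, z ∈ A := by
  classical
  have hwW : (⟨w, hw⟩ : G.Path x y) = W.toPath := (hG.subsingleton_path x y).elim _ _
  intro z hz
  rw [show w = W.toPath.1 from congrArg Subtype.val hwW] at hz
  exact hW z (W.support_toPath_subset_support hz)

lemma SimpleGraph.Walk.IsPath.start_notMem_support_dropUntil [DecidableEq V] {w : G.Walk x y}
    (hw : w.IsPath) (hu : u ∈ w.support) (hxu : x ≠ u) : x ∉ (w.dropUntil u hu).support :=
  fun hx => (w.take_spec hu ▸ hw).ne_of_mem_support_of_append hxu
    (w.takeUntil u hu).start_mem_support hx rfl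

lemma SimpleGraph.Walk.IsPath.append_of_support_inter {z : V} {p : G.Walk x y}
    {q : G.Walk y z} (hp : p.IsPath) (hq : q.IsPath)
    (hpq : ∀ t ∈ p.support, t ∈ q.support → t = y) : (p.append q).IsPath := by
  rw [Walk.isPath_def, Walk.support_append]
  refine hp.support_nodup.append (hq.support_nodup.sublist q.support.tail_sublist) ?_
  intro t htp htq
  have hty : t = y := hpq t htp (List.mem_of_mem_tail htq)
  have hnodup := hq.support_nodup
  rw [← q.cons_tail_support, List.nodup_cons] at hnodup
  exact hnodup.1 (hty ▸ htq)

end Paths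

section SearchTree

variable {G : SimpleGraph V} {par : V → Option V} {S : Set V} {r u v w p : V}

lemma mem_subtree_self : v ∈ subtree par v := .refl

lemma mem_subtree_of_par_eq (h : par v = some p) : v ∈ subtree par p := .single h

lemma exists_child_of_mem_subtree (hu : u ∈ subtree par v) (huv : u ≠ v) :
    ∃ c, par c = some v ∧ u ∈ subtree par c := by
  rcases Relation.ReflTransGen.cases_tail hu with h | ⟨c, hc, hcv⟩
  · exact absurd h.symm huv
  · exact ⟨c, hcv, hc⟩

lemma eq_of_isAnc_of_par_eq_self (hv : par v = some v) (h : isAnc par u v) : u = v := by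
  induction h with
  | refl => rfl
  | tail _ hstep ih => subst ih; exact Option.some_injective _ (hstep.symm.trans hv)

lemma IsSearchTree.root_mem (hT : IsSearchTree G par S r) : r ∈ S := by
  cases hT with
  | node _ _ _ hr => exact hr

lemma IsSearchTree.exists_par_eq (hT : IsSearchTree G par S r) (hu : u ∈ S) (hur : u ≠ r) :
    ∃ w, par u = some w ∧ (w = r ∨ w ∈ compIn G (S \ {r}) u) := by
  induction hT generalizing u with
  | node S r ρ hr hρ hsub ih =>
    by_cases huρ : u = ρ u
    · exact ⟨r, huρ ▸ hρ u hu hur, .inl rfl⟩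
    obtain ⟨w, huw, hw⟩ := ih u hu hur mem_compIn_self huρ
    refine ⟨w, huw, .inr ?_⟩
    rcases hw with rfl | hw
    · exact (hsub u hu hur).root_mem
    · exact (compIn_subset (A := compIn G (S \ {r}) u \ {ρ u}) ⟨mem_compIn_self, huρ⟩ hw).1

/-- The invariant for inducting over `IsSearchTree`: without it, vertices outside `S` could
hang below `r`, and `subtree par r = S` would fail. -/
def ChildClosed (par : V → Option V) (S : Set V) (r : V) : Prop :=
  ∀ x y, par x = some y → y ∈ S → x ∈ S \ {r}

lemma ChildClosed.subtree_subset (hS : ChildClosed par S r) (hr : r ∈ S) :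
    subtree par r ⊆ S := by
  intro u hu
  induction hu using Relation.ReflTransGen.head_induction_on with
  | refl => exact hr
  | head hstep _ ih => exact (hS _ _ hstep ih).1

lemma IsSearchTree.childClosed_compIn (hT : IsSearchTree G par S r) (hS : ChildClosed par S r)
    (hv : v ∈ S \ {r}) (hwr : par w = some r) : ChildClosed par (compIn G (S \ {r}) v) w := by
  intro x y hxy hy
  have hyS : y ∈ S \ {r} := compIn_subset hv hy
  have hxS : x ∈ S \ {r} := hS x y hxy hyS.1
  refine ⟨?_, fun hxw => hyS.2 (Option.some_injective _ (hxy.symm.trans (hxw ▸ hwr)))⟩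
  obtain ⟨z, hxz, hz⟩ := hT.exists_par_eq hxS.1 hxS.2
  obtain rfl : z = y := Option.some_injective _ (hxz.symm.trans hxy)
  rcases hz with rfl | hz
  · exact absurd rfl hyS.2
  · exact mem_compIn_of_reachIn hy (reachIn.symm hz)

theorem IsSearchTree.subtree_eq (hT : IsSearchTree G par S r) (hS : ChildClosed par S r) :
    subtree par r = S ∧ ∀ v ∈ S, v ≠ r →
      ∃ p, par v = some p ∧ subtree par v = compIn G (subtree par p \ {p}) v := by
  induction hT with
  | node S r ρ hr hρ hsub ih =>
    have hcomp : ∀ v ∈ S, v ≠ r → subtree par (ρ v) = compIn G (S \ {r}) v ∧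
        ∀ u ∈ compIn G (S \ {r}) v, u ≠ ρ v →
          ∃ p, par u = some p ∧ subtree par u = compIn G (subtree par p \ {p}) u :=
      fun v hv hvr => ih v hv hvr
        ((IsSearchTree.node S r ρ hr hρ hsub).childClosed_compIn hS ⟨hv, hvr⟩ (hρ v hv hvr))
    have hSr : subtree par r = S := by
      refine (hS.subtree_subset hr).antisymm fun u hu => ?_
      by_cases hur : u = r
      · exact hur ▸ mem_subtree_self
      have hu' : u ∈ subtree par (ρ u) := (hcomp u hu hur).1 ▸ mem_compIn_self
      exact .tail hu' (hρ u hu hur)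
    refine ⟨hSr, fun v hv hvr => ?_⟩
    by_cases hvρ : v = ρ v
    · refine ⟨r, hvρ ▸ hρ v hv hvr, ?_⟩
      have h := (hcomp v hv hvr).1
      rw [← hvρ] at h
      rw [hSr, h]
    · exact (hcomp v hv hvr).2 v mem_compIn_self hvρ

lemma exists_mem_support_mem_bdry {x y : V} (W : G.Walk x y) (hx : x ∈ subtree par p)
    (hy : y ∉ subtree par p) : ∃ e ∈ W.support, e ∈ bdry G par p := by
  obtain ⟨d, hd, hd₁, hd₂⟩ := W.exists_boundary_dart _ hx hy
  exact ⟨d.snd, W.dart_snd_mem_support_of_mem_darts hd, hd₂, d.fst, hd₁, d.adj.symm⟩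

end SearchTree

section RootedSearchTree

variable {G : SimpleGraph V} {par : V → Option V} {r u v p c : V}

lemma childClosed_univ (hroot : par r = none) : ChildClosed par Set.univ r :=
  fun x _ hx _ => ⟨trivial, fun hxr => by simp [hxr ▸ hroot] at hx⟩

lemma subtree_root_eq_univ (hroot : par r = none) (hT : IsSearchTree G par Set.univ r) :
    subtree par r = Set.univ :=
  (hT.subtree_eq (childClosed_univ hroot)).1

lemma subtree_eq_compIn (hroot : par r = none) (hT : IsSearchTree G par Set.univ r)
    (hvp : par v = some p) : subtree par v = compIn G (subtree par p \ {p}) v := by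
  have hvr : v ≠ r := by rintro rfl; simp [hroot] at hvp
  obtain ⟨q, hvq, hq⟩ := (hT.subtree_eq (childClosed_univ hroot)).2 v trivial hvr
  obtain rfl : q = p := Option.some_injective _ (hvq.symm.trans hvp)
  exact hq

lemma ne_of_par_eq_some (hroot : par r = none) (hT : IsSearchTree G par Set.univ r)
    (hvp : par v = some p) : v ≠ p := by
  rintro rfl
  have hrv : v ∈ subtree par r := (subtree_root_eq_univ hroot hT).symm ▸ Set.mem_univ v
  simp [eq_of_isAnc_of_par_eq_self hvp hrv ▸ hroot] at hvp

lemma subtree_subset_diff (hroot : par r = none) (hT : IsSearchTree G par Set.univ r)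
    (hvp : par v = some p) : subtree par v ⊆ subtree par p \ {p} := by
  rw [subtree_eq_compIn hroot hT hvp]
  exact compIn_subset ⟨mem_subtree_of_par_eq hvp, ne_of_par_eq_some hroot hT hvp⟩

lemma bdry_subset_insert (hroot : par r = none) (hT : IsSearchTree G par Set.univ r)
    (hvp : par v = some p) : bdry G par v ⊆ insert p (bdry G par p) := by
  rintro x ⟨hxv, u, hu, hxu⟩
  by_cases hxp : x = p
  · exact .inl hxp
  have huTp := subtree_subset_diff hroot hT hvp hu
  refine .inr ⟨fun hx => hxv ?_, u, huTp.1, hxu⟩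
  rw [subtree_eq_compIn hroot hT hvp] at hu ⊢
  exact mem_compIn_of_reachIn hu (.single ⟨huTp, ⟨hx, hxp⟩, hxu.symm⟩)

lemma exists_walk_in_subtree (hG : G.Connected) (hroot : par r = none)
    (hT : IsSearchTree G par Set.univ r) (hu : u ∈ subtree par v) :
    ∃ w : G.Walk v u, ∀ z ∈ w.support, z ∈ subtree par v := by
  cases hvp : par v with
  | none =>
    obtain rfl : v = r := by
      by_contra hvr
      obtain ⟨q, hvq, -⟩ := (hT.subtree_eq (childClosed_univ hroot)).2 v trivial hvr
      simp [hvq] at hvp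
    rw [subtree_root_eq_univ hroot hT]
    exact ⟨(hG.preconnected v u).some, fun _ _ => trivial⟩
  | some p =>
    rw [subtree_eq_compIn hroot hT hvp] at hu ⊢
    exact exists_walk_of_reachIn (reachIn_compIn hu) mem_compIn_self

lemma par_mem_bdry (hG : G.Connected) (hroot : par r = none)
    (hT : IsSearchTree G par Set.univ r) (hcv : par c = some v) : v ∈ bdry G par c := by
  obtain ⟨w, hw⟩ := exists_walk_in_subtree hG hroot hT (mem_subtree_of_par_eq hcv)
  obtain ⟨e, he, heB⟩ := exists_mem_support_mem_bdry w.reverse mem_subtree_self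
    (subtree_subset_diff hroot hT hcv · |>.2 rfl)
  rcases bdry_subset_insert hroot hT hcv heB with rfl | heB'
  · exact heB
  · exact absurd (hw e (by simpa using he)) heB'.1

lemma support_subset_insert_subtree (hG : G.IsTree) (hroot : par r = none)
    (hT : IsSearchTree G par Set.univ r) (hvp : par v = some p) {Q : G.Walk v p}
    (hQ : Q.IsPath) : ∀ z ∈ Q.support, z ∈ insert p (subtree par v) := by
  obtain ⟨-, u, hu, hpu⟩ := par_mem_bdry hG.connected hroot hT hvp
  obtain ⟨w, hw⟩ := exists_walk_in_subtree hG.connected hroot hT hu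
  refine hG.isAcyclic.support_subset_of_walk hQ (w.concat hpu.symm) fun z hz => ?_
  rw [Walk.support_concat, List.mem_append, List.mem_singleton] at hz
  rcases hz with hz | rfl
  · exact .inr (hw z hz)
  · exact .inl rfl

end RootedSearchTree

section TwoCut

variable {G : SimpleGraph V} {par : V → Option V} {r v p a m : V}

lemma eq_of_mem_support_of_mem_support [Finite V] [DecidableEq V] (hG : G.IsTree)
    (hroot : par r = none) (hT : IsSearchTree G par Set.univ r) (h2 : TwoCut G par)
    (hvp : par v = some p) (ha : a ∉ subtree par v) {Q : G.Walk v p} (hQ : Q.IsPath)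
    {P : G.Walk v a} (hP : P.IsPath) (hpP : p ∉ P.support) (hmQ : m ∈ Q.support)
    (hmP : m ∈ P.support) : m = v := by
  by_contra hmv
  have hQsub := support_subset_insert_subtree hG hroot hT hvp hQ
  have hmTv : m ∈ subtree par v := (hQsub m hmQ).resolve_left fun h => hpP (h ▸ hmP)
  obtain ⟨c, hcv, hmTc⟩ := exists_child_of_mem_subtree hmTv hmv
  have hTc := subtree_subset_diff hroot hT hcv
  have hvB : v ∈ bdry G par c := par_mem_bdry hG.connected hroot hT hcv
  have hpB : p ∈ bdry G par c := by
    obtain ⟨e, he, heB⟩ := exists_mem_support_mem_bdry (Q.dropUntil m hmQ) hmTc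
      fun h => (subtree_subset_diff hroot hT hvp (hTc h).1).2 rfl
    have hev : e ≠ v := by
      rintro rfl
      exact hQ.start_notMem_support_dropUntil hmQ (Ne.symm hmv) he
    have heTv : e ∉ subtree par v :=
      ((bdry_subset_insert hroot hT hcv heB).resolve_left hev).1
    obtain rfl : e = p :=
      (hQsub e (Q.support_dropUntil_subset_support hmQ he)).resolve_right heTv
    exact heB
  obtain ⟨b, hb, hbB⟩ := exists_mem_support_mem_bdry (P.dropUntil m hmP) hmTc
    fun h => ha (hTc h).1
  have hbv : v ≠ b := fun h => hP.start_notMem_support_dropUntil hmP (Ne.symm hmv) (h ▸ hb)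
  have hpb : p ≠ b := fun h => hpP (h ▸ P.support_dropUntil_subset_support hmP hb)
  exact (h2 c).not_gt <| (Set.two_lt_ncard_iff).mpr
    ⟨v, p, b, hvB, hpB, hbB, ne_of_par_eq_some hroot hT hvp, hbv, hpb⟩

theorem exists_isPath_of_notMem_subtree [Finite V] (hG : G.IsTree) (hroot : par r = none)
    (hT : IsSearchTree G par Set.univ r) (h2 : TwoCut G par) (hvp : par v = some p)
    (ha : a ∉ subtree par v) :
    ∃ (x y : V) (w : G.Walk x y), w.IsPath ∧
      v ∈ w.support ∧ p ∈ w.support ∧ a ∈ w.support := by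
  classical
  obtain ⟨P, hP, -⟩ := hG.existsUnique_path v a
  by_cases hpP : p ∈ P.support
  · exact ⟨v, a, P, hP, P.start_mem_support, hpP, P.end_mem_support⟩
  obtain ⟨Q, hQ, -⟩ := hG.existsUnique_path v p
  refine ⟨p, a, Q.reverse.append P, hQ.reverse.append_of_support_inter hP ?_, ?_, ?_, ?_⟩
  · intro m hmQ hmP
    exact eq_of_mem_support_of_mem_support hG hroot hT h2 hvp ha hQ hP hpP
      (by simpa using hmQ) hmP
  all_goals simp

end TwoCut

/-- In a 2-cut STT, a node `v`, its parent `p`, and any `a ∈ ∂(T_p)`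
lie on a common path in the underlying tree `G`. -/
theorem node_parent_bdry_on_common_path [Fintype V] (G : SimpleGraph V) (hG : G.IsTree)
    (par : V → Option V) (r : V) (hroot : par r = none)
    (hT : IsSearchTree G par Set.univ r) (h2 : TwoCut G par)
    (v p a : V) (hvp : par v = some p) (ha : a ∈ bdry G par p) :
    ∃ (x y : V) (w : G.Walk x y), w.IsPath ∧
      v ∈ w.support ∧ p ∈ w.support ∧ a ∈ w.support :=
  exists_isPath_of_notMem_subtree hG hroot hT h2 hvp
    fun haTv => ha.1 (subtree_subset_diff hroot hT hvp haTv).1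
end

section
/- Let T be a 2-cut STT on a tree G, let v be a node with parent p and grandparent g. Then g does not lie strictly between v and p on the path in G containing v, p, g; that is, either v lies between p and g, or p lies between v and g (or two of them coincide as endpoints). -/
open SimpleGraph

variable {V : Type*}

/-! The grandparent `g` is the root of the search tree built on some vertex set `S`; its child `p`
is the root of the tree on a component `C` of `S \ {g}`, and `v`, a child of `p`, lies in `C` too.
A walk inside `C` joins `v` to `p` and avoids `g`. -/

lemma mem_of_reachIn {G : SimpleGraph V} {S : Set V} {a b : V} (h : reachIn G S a b)
    (ha : a ∈ S) : b ∈ S := by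
  induction h with
  | refl => exact ha
  | tail _ hstep _ => exact hstep.2.1

lemma compIn_subset_s15 {G : SimpleGraph V} {S : Set V} {a : V} (ha : a ∈ S) :
    compIn G S a ⊆ S :=
  fun _ hb => mem_of_reachIn hb ha

lemma exists_walk_of_reachIn_s15 {G : SimpleGraph V} {S : Set V} {a b : V}
    (h : reachIn G S a b) (ha : a ∈ S) : ∃ w : G.Walk a b, ∀ x ∈ w.support, x ∈ S := by
  induction h using Relation.ReflTransGen.head_induction_on with
  | refl => exact ⟨.nil, by simpa using ha⟩
  | head hstep _ ih =>
    obtain ⟨w, hw⟩ := ih hstep.2.1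
    refine ⟨.cons hstep.2.2 w, ?_⟩
    simpa [Walk.support_cons] using ⟨ha, hw⟩

namespace IsSearchTree

variable {G : SimpleGraph V} {par : V → Option V}

theorem parent_mem {S : Set V} {r : V} (hT : IsSearchTree G par S r) {x y : V}
    (hx : x ∈ S) (hxr : x ≠ r) (hxy : par x = some y) : y ∈ S := by
  induction hT with
  | node S r ρ hr hρ h ih =>
    by_cases hxρ : x = ρ x
    · have hy : some y = some r := by rw [← hxy, hxρ, hρ x hx hxr]
      exact Option.some_injective _ hy ▸ hr
    · have hy := ih x hx hxr Relation.ReflTransGen.refl hxρ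
      exact (compIn_subset_s15 (S := S \ {r}) ⟨hx, hxr⟩ hy).1

/-- `hroot` is what is known of the root of a component subtree: its parent is the root of the
enclosing tree, which lies outside the component. -/
theorem exists_walk_avoiding_grandparent {S : Set V} {r : V} (hT : IsSearchTree G par S r)
    (hroot : ∀ y, par r = some y → y ∉ S) {v p g : V} (hv : v ∈ S) (hp : p ∈ S)
    (hg : g ∈ S) (hvp : par v = some p) (hpg : par p = some g) :
    ∃ w : G.Walk v p, ∀ x ∈ w.support, x ∈ S \ {g} := by
  induction hT with
  | node S r ρ hr hρ h ih =>
    have hpr : p ≠ r := by rintro rfl; exact hroot g hpg hg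
    have hvr : v ≠ r := by rintro rfl; exact hroot p hvp hp
    have hvC : v ∈ compIn G (S \ {r}) v := Relation.ReflTransGen.refl
    have hCS : compIn G (S \ {r}) v ⊆ S \ {r} := compIn_subset_s15 ⟨hv, hvr⟩
    have hvρ : v ≠ ρ v := by
      rintro hv'; exact hpr (Option.some_injective _ (hvp ▸ hv' ▸ hρ v hv hvr))
    have hpC : p ∈ compIn G (S \ {r}) v := (h v hv hvr).parent_mem hvC hvρ hvp
    by_cases hgr : g = r
    · subst hgr
      exact exists_walk_of_reachIn_s15 hpC ⟨hv, hvr⟩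
    · have hpρ : p ≠ ρ v := by
        rintro hp'; exact hgr (Option.some_injective _ (hpg ▸ hp' ▸ hρ v hv hvr))
      have hgC : g ∈ compIn G (S \ {r}) v := (h v hv hvr).parent_mem hpC hpρ hpg
      have hρroot : ∀ y, par (ρ v) = some y → y ∉ compIn G (S \ {r}) v := by
        intro y hy hyC
        rw [hρ v hv hvr, Option.some_inj] at hy
        exact (hCS hyC).2 hy.symm
      obtain ⟨w, hw⟩ := ih v hv hvr hρroot hvC hpC hgC
      exact ⟨w, fun x hx => ⟨(hCS (hw x hx).1).1, (hw x hx).2⟩⟩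

end IsSearchTree

theorem grandparent_not_between_general (G : SimpleGraph V)
    (par : V → Option V) (r : V) (hroot : par r = none)
    (hT : IsSearchTree G par Set.univ r)
    (v p g : V) (hvp : par v = some p) (hpg : par p = some g) :
    ∃ w : G.Walk v p, w.IsPath ∧ g ∉ w.support := by
  classical
  obtain ⟨w, hw⟩ := hT.exists_walk_avoiding_grandparent (by simp [hroot])
    (Set.mem_univ v) (Set.mem_univ p) (Set.mem_univ g) hvp hpg
  exact ⟨w.bypass, w.bypass_isPath, fun hg => (hw g (w.support_bypass_subset_support hg)).2 rfl⟩

/-- In a 2-cut STT on a tree `G`, the grandparent `g` of a node `v` with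
parent `p` does not lie strictly between `v` and `p` in `G`: there is a path in `G`
from `v` to `p` avoiding `g`. -/
theorem grandparent_not_between [Fintype V] (G : SimpleGraph V) (hG : G.IsTree)
    (par : V → Option V) (r : V) (hroot : par r = none)
    (hT : IsSearchTree G par Set.univ r) (h2 : TwoCut G par)
    (v p g : V) (hvp : par v = some p) (hpg : par p = some g) :
    ∃ w : G.Walk v p, w.IsPath ∧ g ∉ w.support :=
  grandparent_not_between_general G par r hroot hT v p g hvp hpg
end
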